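/- Let k be a field, C a k-coalgebra and C* its dual convolution algebra. If C* is a left D-ring, i.e. every left ideal of C* is of the form {f ∈ C* : f*h = 0 for all h ∈ H} for some subset H ⊆ C*, then C (equivalently C*) is finite dimensional over k. -/

import Mathlib

/-!
`C*` acts on `C` by `h ⇀ c = ∑ c₁ h(c₂)` (`wedge`) with `(f * h)(c) = f(h ⇀ c)`, so the left
annihilator of `H ⊆ C*` is the orthogonal of `∑_{h ∈ H} h ⇀ C`; in a left D-ring every left ideal
is therefore the orthogonal of a subspace of `C`. For the ideal `I` of those `h` for which `h ⇀ C`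
is finite dimensional this gives `I = P^⊥` with `P = I^⊥`. For the annihilator of a single `c`
it gives `c ∈ ∑_{h ∈ I} h ⇀ C`, because `h ⇀ c` only depends on `h` on the finite-dimensional
span of the `c₂`.

If `C` were infinite dimensional, then for no finite-dimensional `D` and `W` could `W` contain
`u ⇀ C` for all `u ∈ (P + D)^⊥`, a subspace of finite codimension in `I`. One then picks greedily
`uₙ ∈ P^⊥` and `xₙ ∈ C`, with `uₙ` vanishing on the coefficient spaces of the earlier `xⱼ` and
`uₙ ⇀ xₙ` outside the earlier ranges. The series `h = ∑ uₙ` converges in the finite topology to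
an element of `P^⊥ = I`, yet the `h ⇀ xₙ` are linearly independent.
-/

open TensorProduct Coalgebra

noncomputable section

namespace Paper

variable {k : Type*} [Field k] {C : Type*} [AddCommGroup C] [Module k C] [Coalgebra k C]

/-- The convolution product on the dual of a coalgebra. -/
def conv (f g : Module.Dual k C) : Module.Dual k C :=
  LinearMap.mul' k k ∘ₗ TensorProduct.map f g ∘ₗ comul

lemma conv_apply (f g : Module.Dual k C) (c : C) :
    conv f g c = LinearMap.mul' k k (TensorProduct.map f g (comul c)) := rfl

private lemma conv_assoc (f g h : Module.Dual k C) : conv (conv f g) h = conv f (conv g h) := by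
  have h1 : (LinearMap.mul' k k ∘ₗ TensorProduct.map (conv f g) h : C ⊗[k] C →ₗ[k] k)
      = (LinearMap.mul' k k ∘ₗ TensorProduct.map
          (LinearMap.mul' k k ∘ₗ TensorProduct.map f g) h)
        ∘ₗ (comul (R := k) (A := C)).rTensor C := by
    ext x y
    simp [conv_apply]
  have h2 : (LinearMap.mul' k k ∘ₗ TensorProduct.map f (conv g h) : C ⊗[k] C →ₗ[k] k)
      = (LinearMap.mul' k k ∘ₗ TensorProduct.map f
          (LinearMap.mul' k k ∘ₗ TensorProduct.map g h))
        ∘ₗ (comul (R := k) (A := C)).lTensor C := by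
    ext x y
    simp [conv_apply]
  have h3 : (LinearMap.mul' k k ∘ₗ TensorProduct.map f
          (LinearMap.mul' k k ∘ₗ TensorProduct.map g h))
        ∘ₗ (TensorProduct.assoc k C C C).toLinearMap
      = LinearMap.mul' k k ∘ₗ TensorProduct.map
          (LinearMap.mul' k k ∘ₗ TensorProduct.map f g) h := by
    apply TensorProduct.ext_threefold
    intro x y z
    simp [mul_assoc]
  ext c
  have e1 : conv (conv f g) h c
      = (LinearMap.mul' k k ∘ₗ TensorProduct.map (conv f g) h) (comul c) := rfl
  have e2 : conv f (conv g h) c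
      = (LinearMap.mul' k k ∘ₗ TensorProduct.map f (conv g h)) (comul c) := rfl
  rw [e1, e2, h1, h2]
  simp only [LinearMap.comp_apply]
  rw [← Coalgebra.coassoc_apply (R := k) c]
  exact (LinearMap.congr_fun h3 ((comul (R := k) (A := C)).rTensor C (comul c))).symm

private lemma counit_conv (f : Module.Dual k C) : conv counit f = f := by
  have h1 : (TensorProduct.map (counit (R := k) (A := C)) f : C ⊗[k] C →ₗ[k] k ⊗[k] k)
      = f.lTensor k ∘ₗ (counit (R := k) (A := C)).rTensor C := by
    ext x y
    simp
  ext c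
  rw [conv_apply, h1, LinearMap.comp_apply, Coalgebra.rTensor_counit_comul,
    LinearMap.lTensor_tmul, LinearMap.mul'_apply, one_mul]

private lemma conv_counit (f : Module.Dual k C) : conv f counit = f := by
  have h1 : (TensorProduct.map f (counit (R := k) (A := C)) : C ⊗[k] C →ₗ[k] k ⊗[k] k)
      = f.rTensor k ∘ₗ (counit (R := k) (A := C)).lTensor C := by
    ext x y
    simp
  ext c
  rw [conv_apply, h1, LinearMap.comp_apply, Coalgebra.lTensor_counit_comul,
    LinearMap.rTensor_tmul, LinearMap.mul'_apply, mul_one]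

private lemma conv_add (f g h : Module.Dual k C) : conv f (g + h) = conv f g + conv f h := by
  ext c
  simp only [conv_apply, TensorProduct.map_add_right, LinearMap.add_apply, map_add]

private lemma add_conv (f g h : Module.Dual k C) : conv (f + g) h = conv f h + conv g h := by
  ext c
  simp only [conv_apply, TensorProduct.map_add_left, LinearMap.add_apply, map_add]

private lemma zero_conv (f : Module.Dual k C) : conv 0 f = 0 := by
  ext c
  have : TensorProduct.map (0 : Module.Dual k C) f = 0 := by
    ext x y; simp
  simp [conv_apply, this]

private lemma conv_zero (f : Module.Dual k C) : conv f 0 = 0 := by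
  ext c
  have : TensorProduct.map f (0 : Module.Dual k C) = 0 := by
    ext x y; simp
  simp [conv_apply, this]

/-- The convolution algebra structure on the dual of a coalgebra. -/
instance instRingDual : Ring (Module.Dual k C) where
  __ := (inferInstance : AddCommGroup (Module.Dual k C))
  mul := conv
  one := counit
  mul_assoc := conv_assoc
  one_mul := counit_conv
  mul_one := conv_counit
  left_distrib := conv_add
  right_distrib := add_conv
  zero_mul := zero_conv
  mul_zero := conv_zero

lemma dual_mul_def (f g : Module.Dual k C) : f * g = conv f g := rfl

lemma dual_mul_apply (f g : Module.Dual k C) (c : C) :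
    (f * g) c = LinearMap.mul' k k (TensorProduct.map f g (comul c)) := rfl

lemma dual_one_def : (1 : Module.Dual k C) = counit := rfl

variable {k : Type*} [Field k] {C : Type*} [AddCommGroup C] [Module k C] [Coalgebra k C]

instance : IsScalarTower k (Module.Dual k C) (Module.Dual k C) :=
  ⟨fun a f g => by
    show conv (a • f) g = a • conv f g
    ext c
    simp [conv_apply, TensorProduct.map_smul_left]⟩

/-- For a subset `X ⊆ C`, its orthogonal `X^⊥ ⊆ C*`. -/
def perpC (X : Set C) : Set (Module.Dual k C) := {f | ∀ x ∈ X, f x = 0}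

/-- For a subset `Y ⊆ C*`, its orthogonal `Y^⊥ ⊆ C`. -/
def perpD (Y : Set (Module.Dual k C)) : Set C := {c | ∀ f ∈ Y, f c = 0}

/-- For `h ∈ C*`, the map `c ↦ ∑ c₁ h(c₂)`; this is the canonical left action of `C*` on `C`. -/
def wedge (h : Module.Dual k C) : C →ₗ[k] C :=
  (TensorProduct.rid k C).toLinearMap ∘ₗ h.lTensor C ∘ₗ comul

variable (k C) in
/-- A left `C*`-module `M` is rational if every element `m` admits finitely many
`mᵢ ∈ M`, `cᵢ ∈ C` with `f • m = ∑ᵢ f(cᵢ) • mᵢ` for all `f ∈ C*` (the scalar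
`f (cs i) ∈ k` acting through the `k`-multiple `f (cs i) • 1` of the identity of `C*`). -/
def IsRationalLeft (M : Type*) [AddCommGroup M] [Module (Module.Dual k C) M] : Prop :=
  ∀ m : M, ∃ (n : ℕ) (ms : Fin n → M) (cs : Fin n → C),
    ∀ f : Module.Dual k C, f • m = ∑ i, (f (cs i) • (1 : Module.Dual k C)) • ms i

variable (k C) in
/-- A right `C*`-module (i.e. a left module over the opposite ring) `M` is rational if every
element `m` admits finitely many `mᵢ ∈ M`, `cᵢ ∈ C` with `m • f = ∑ᵢ f(cᵢ) • mᵢ` for all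
`f ∈ C*`. -/
def IsRationalRight (M : Type*) [AddCommGroup M] [Module (Module.Dual k C)ᵐᵒᵖ M] : Prop :=
  ∀ m : M, ∃ (n : ℕ) (ms : Fin n → M) (cs : Fin n → C),
    ∀ f : Module.Dual k C,
      (MulOpposite.op f) • m
        = ∑ i, (MulOpposite.op (f (cs i) • (1 : Module.Dual k C))) • ms i

/-- A ring `R` is a left D-ring if every left ideal is a left annihilator. -/
def IsLeftDRing (R : Type*) [Ring R] : Prop :=
  ∀ I : Ideal R, ∃ H : Set R, (I : Set R) = {r : R | ∀ h ∈ H, r * h = 0}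

open Module Submodule

section LinearAlgebra

variable {K V X Y : Type*} [Field K] [AddCommGroup V] [Module K V]
  [AddCommGroup X] [Module K X] [AddCommGroup Y] [Module K Y]

theorem exists_finset_le_span_sup_ker {R M N : Type*} [Ring R] [AddCommGroup M]
    [Module R M] [AddCommGroup N] [Module R N] [IsNoetherian R N] (f : M →ₗ[R] N)
    (A : Submodule R M) : ∃ s : Finset M, ↑s ⊆ (A : Set M) ∧ A ≤ span R s ⊔ LinearMap.ker f := by
  classical
  obtain ⟨t, ht⟩ := IsNoetherian.noetherian (A.map f)
  have hlift : ∀ y ∈ t, ∃ a ∈ A, f a = y := fun y hy => mem_map.1 (ht ▸ subset_span hy)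
  choose! g hgA hgf using hlift
  refine ⟨t.image g, by simpa [Set.subset_def] using hgA, fun a ha => ?_⟩
  have hmap : (span R (t.image g : Set M)).map f = A.map f := by
    rw [map_span, Finset.coe_image, ← Set.image_comp,
      Set.image_congr (g := id) (by simpa using hgf), Set.image_id, ht]
  obtain ⟨b, hb, hfb⟩ := mem_map.1 (hmap ▸ mem_map_of_mem ha)
  exact mem_sup.2 ⟨b, hb, a - b, by simp [hfb], add_sub_cancel b a⟩

theorem exists_dual_eq_sum_range {Z : ℕ → Submodule K V} (hZ : Monotone Z) (u : ℕ → Dual K V)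
    (hu : ∀ n l, n ≤ l → u l ∈ (Z n).dualAnnihilator) :
    ∃ h : Dual K V, ∀ n, ∀ z ∈ Z n, h z = ∑ l ∈ Finset.range n, u l z := by
  let p : ℕ → V →ₗ.[K] K := fun n =>
    ⟨Z n, (∑ l ∈ Finset.range n, u l).domRestrict (Z n)⟩
  have hp_apply : ∀ n (z : Z n), p n z = ∑ l ∈ Finset.range n, u l z := fun n z => by
    simp [p]
  have hp : Monotone p := by
    intro n m hnm
    refine ⟨hZ hnm, fun z z' hzz' => ?_⟩
    rw [hp_apply, hp_apply, ← hzz', ← Finset.sum_range_add_sum_Ico _ hnm,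
      Finset.sum_eq_zero fun l hl => (mem_dualAnnihilator _).1
        (hu n l (Finset.mem_Ico.1 hl).1) z z.2, add_zero]
  have hdir : DirectedOn (· ≤ ·) (Set.range p) := directedOn_range.2 hp.directed_le
  obtain ⟨h, hh⟩ := LinearMap.exists_extend (LinearPMap.sSup _ hdir).toFun
  refine ⟨h, fun n z hz => ?_⟩
  rw [← hp_apply n ⟨z, hz⟩, ← LinearPMap.sSup_apply hdir (Set.mem_range_self n)]
  exact LinearMap.congr_fun hh ⟨z, _⟩

theorem linearIndependent_of_triangular {v : ℕ → Y} (φ : ℕ → Dual K Y)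
    (hlt : ∀ j n, j < n → φ n (v j) = 0) (hdiag : ∀ n, φ n (v n) ≠ 0) :
    LinearIndependent K v := by
  classical
  rw [linearIndependent_iff']
  intro s c hsum i hi
  by_contra hci
  have hS : (s.filter (c · ≠ 0)).Nonempty := ⟨i, Finset.mem_filter.2 ⟨hi, hci⟩⟩
  obtain ⟨hms, hcm⟩ := Finset.mem_filter.1 ((s.filter (c · ≠ 0)).max'_mem hS)
  set m := (s.filter (c · ≠ 0)).max' hS
  have hvanish : ∀ j ∈ s, j ≠ m → c j * φ m (v j) = 0 := by
    intro j hj hjm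
    rcases lt_or_gt_of_ne hjm with hjm | hmj
    · rw [hlt j m hjm, mul_zero]
    · by_contra hne
      exact (Finset.le_max' _ j (Finset.mem_filter.2 ⟨hj, left_ne_zero_of_mul hne⟩)).not_gt hmj
  have hφ := congr_arg (φ m) hsum
  simp only [map_sum, map_smul, smul_eq_mul, map_zero] at hφ
  rw [Finset.sum_eq_single_of_mem m hms hvanish] at hφ
  exact mul_ne_zero hcm (hdiag m) hφ

theorem exists_mem_dualAnnihilator_not_finiteDimensional_range
    (T : Dual K V →ₗ[K] X →ₗ[K] Y) (P : Submodule K V) (N : X → Submodule K V)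
    (hN : ∀ x, ∀ h ∈ (N x).dualAnnihilator, T h x = 0)
    (u : ℕ → Dual K V) (x : ℕ → X) (φ : ℕ → Dual K Y) (huP : ∀ n, u n ∈ P.dualAnnihilator)
    (huN : ∀ j n, j < n → u n ∈ (N (x j)).dualAnnihilator)
    (hφ : ∀ j n, j < n → φ n ∈ (LinearMap.range (T (u j))).dualAnnihilator)
    (hφu : ∀ n, φ n (T (u n) (x n)) ≠ 0) :
    ∃ h ∈ P.dualAnnihilator, ¬ FiniteDimensional K (LinearMap.range (T h)) := by
  let Z : ℕ → Submodule K V := fun n => P ⊔ ⨆ (j) (_ : j < n), N (x j)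
  have hZ : Monotone Z := fun n m hnm =>
    sup_le_sup_left (biSup_mono fun j hj => lt_of_lt_of_le hj hnm) P
  have huZ : ∀ n l, n ≤ l → u l ∈ (Z n).dualAnnihilator := by
    intro n l hnl
    simp only [Z, dualAnnihilator_sup_eq, dualAnnihilator_iSup_eq, mem_inf, mem_iInf]
    exact ⟨huP l, fun j hj => huN j l (lt_of_lt_of_le hj hnl)⟩
  obtain ⟨h, hh⟩ := exists_dual_eq_sum_range hZ u huZ
  have hhP : h ∈ P.dualAnnihilator :=
    (mem_dualAnnihilator _).2 fun z hz => by simpa using hh 0 z (mem_sup_left hz)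
  have hv : ∀ j, T h (x j) = ∑ l ∈ Finset.range (j + 1), T (u l) (x j) := by
    intro j
    have hN' : h - ∑ l ∈ Finset.range (j + 1), u l ∈ (N (x j)).dualAnnihilator := by
      refine (mem_dualAnnihilator _).2 fun z hz => ?_
      have hzZ : z ∈ Z (j + 1) := mem_sup_right
        (le_iSup₂ (f := fun i (_ : i < j + 1) => N (x i)) j j.lt_succ_self hz)
      rw [LinearMap.sub_apply, hh (j + 1) z hzZ, LinearMap.sum_apply, sub_self]
    rw [← sub_eq_zero, ← LinearMap.sum_apply, ← LinearMap.sub_apply, ← map_sum, ← map_sub]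
    exact hN (x j) _ hN'
  refine ⟨h, hhP, fun hfin => Module.Finite.not_linearIndependent_of_infinite (R := K)
    (fun j => (⟨T h (x j), LinearMap.mem_range_self _ _⟩ : LinearMap.range (T h)))
    (LinearIndependent.of_comp (LinearMap.range (T h)).subtype ?_)⟩
  refine linearIndependent_of_triangular φ (fun j n hjn => ?_) (fun n => ?_)
  · show φ n (T h (x j)) = 0
    rw [hv, map_sum]
    exact Finset.sum_eq_zero fun l hl => (mem_dualAnnihilator _).1
      (hφ l n ((Finset.mem_range.1 hl).trans_le hjn)) _ (LinearMap.mem_range_self _ _)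
  · show φ n (T h (x n)) ≠ 0
    rw [hv, map_sum, Finset.sum_range_succ, Finset.sum_eq_zero fun l hl => (mem_dualAnnihilator _).1
      (hφ l n (Finset.mem_range.1 hl)) _ (LinearMap.mem_range_self _ _), zero_add]
    exact hφu n

theorem exists_finiteDimensional_forall_dualAnnihilator_sup_range_le
    (T : Dual K V →ₗ[K] X →ₗ[K] Y) (P : Submodule K V)
    (hloc : ∀ x, ∃ N : Submodule K V, FiniteDimensional K N ∧ ∀ h ∈ N.dualAnnihilator, T h x = 0)
    (hfin : ∀ h ∈ P.dualAnnihilator, FiniteDimensional K (LinearMap.range (T h))) :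
    ∃ (D : Submodule K V) (W : Submodule K Y), FiniteDimensional K D ∧ FiniteDimensional K W ∧
      ∀ u ∈ (P ⊔ D).dualAnnihilator, LinearMap.range (T u) ≤ W := by
  classical
  choose N hNfd hN using hloc
  by_contra! hunif
  -- `φₙ` records `T uₙ xₙ ∉ ⨆ j < n, range (T uⱼ)`, which makes every constraint pairwise.
  obtain ⟨f, hfP, hfr⟩ := exists_seq_of_forall_finset_exists
    (fun a : Dual K V × X × Dual K Y => a.1 ∈ P.dualAnnihilator ∧ a.2.2 (T a.1 a.2.1) ≠ 0)
    (fun a b => b.1 ∈ (N a.2.1).dualAnnihilator ∧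
      b.2.2 ∈ (LinearMap.range (T a.1)).dualAnnihilator) (by
      intro s hs
      let D := ⨆ a : s, N a.1.2.1
      let W := ⨆ a : s, LinearMap.range (T a.1.1)
      have : ∀ a : s, FiniteDimensional K (LinearMap.range (T a.1.1)) :=
        fun a => hfin _ (hs a a.2).1
      obtain ⟨u, hu, hW⟩ := hunif D W inferInstance inferInstance
      obtain ⟨_, ⟨x, rfl⟩, hx⟩ := SetLike.not_le_iff_exists.1 hW
      obtain ⟨φ, hφ, hφx⟩ : ∃ φ ∈ W.dualAnnihilator, φ (T u x) ≠ 0 := by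
        by_contra! h
        exact hx ((Subspace.forall_mem_dualAnnihilator_apply_eq_zero_iff _ _).1 h)
      rw [dualAnnihilator_sup_eq] at hu
      refine ⟨(u, x, φ), ⟨hu.1, hφx⟩, fun a ha => ⟨?_, ?_⟩⟩
      · exact dualAnnihilator_anti (le_iSup (fun a : s => N a.1.2.1) ⟨a, ha⟩) hu.2
      · exact dualAnnihilator_anti (le_iSup (fun a : s => LinearMap.range (T a.1.1)) ⟨a, ha⟩) hφ)
  obtain ⟨h, hhP, hh⟩ := exists_mem_dualAnnihilator_not_finiteDimensional_range T P N hN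
    (fun n => (f n).1) (fun n => (f n).2.1) (fun n => (f n).2.2) (fun n => (hfP n).1)
    (fun j n hjn => (hfr j n hjn).1) (fun j n hjn => (hfr j n hjn).2) (fun n => (hfP n).2)
  exact hh (hfin h hhP)

theorem finiteDimensional_of_iSup_range_eq_top
    (T : Dual K V →ₗ[K] X →ₗ[K] Y) (P : Submodule K V)
    (hloc : ∀ x, ∃ N : Submodule K V, FiniteDimensional K N ∧ ∀ h ∈ N.dualAnnihilator, T h x = 0)
    (hfin : ∀ h ∈ P.dualAnnihilator, FiniteDimensional K (LinearMap.range (T h)))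
    (hcover : ⨆ h ∈ P.dualAnnihilator, LinearMap.range (T h) = ⊤) :
    FiniteDimensional K Y := by
  obtain ⟨D, W, hD, hW, hDW⟩ :=
    exists_finiteDimensional_forall_dualAnnihilator_sup_range_le T P hloc hfin
  obtain ⟨s, hsP, hPs⟩ := exists_finset_le_span_sup_ker D.subtype.dualMap P.dualAnnihilator
  have : ∀ g : s, FiniteDimensional K (LinearMap.range (T g)) := fun g => hfin g (hsP g.2)
  let W' := W ⊔ ⨆ g : s, LinearMap.range (T g)
  have hspan : span K (s : Set (Dual K V)) ≤ ⨅ y, W'.comap (T.flip y) :=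
    span_le.2 fun g hg => mem_iInf _ |>.2 fun y =>
      mem_sup_right (le_iSup (fun g : s => LinearMap.range (T g)) ⟨g, hg⟩ ⟨y, rfl⟩)
  have hle : ∀ h ∈ P.dualAnnihilator, LinearMap.range (T h) ≤ W' := by
    intro h hh
    obtain ⟨g, hg, w, hw, rfl⟩ := mem_sup.1 (hPs hh)
    have hwP : w ∈ P.dualAnnihilator := by
      simpa using sub_mem hh ((span_le.2 hsP) hg)
    have hwD : w ∈ D.dualAnnihilator := by
      rwa [LinearMap.ker_dualMap_eq_dualAnnihilator_range, range_subtype] at hw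
    rintro _ ⟨y, rfl⟩
    rw [map_add, LinearMap.add_apply]
    refine add_mem (mem_iInf _ |>.1 (hspan hg) y) (mem_sup_left (hDW w ?_ ⟨y, rfl⟩))
    rw [dualAnnihilator_sup_eq]
    exact ⟨hwP, hwD⟩
  have : FiniteDimensional K (⊤ : Submodule K Y) :=
    Submodule.finiteDimensional_of_le (hcover ▸ iSup₂_le hle : ⊤ ≤ W')
  exact Module.Finite.equiv Submodule.topEquiv

end LinearAlgebra

theorem mul_apply_eq_apply_wedge (f h : Dual k C) (c : C) : (f * h) c = f (wedge h c) := by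
  simp only [dual_mul_apply, wedge, LinearMap.comp_apply, LinearEquiv.coe_coe, ← (ℛ k c).eq]
  simp [map_sum, mul_comm]

theorem counit_wedge (h : Dual k C) (c : C) : counit (wedge h c) = h c := by
  rw [← dual_one_def, ← mul_apply_eq_apply_wedge, one_mul]

theorem mul_eq_comp_wedge (f h : Dual k C) : f * h = f ∘ₗ wedge h :=
  LinearMap.ext (mul_apply_eq_apply_wedge f h)

theorem wedge_mul (f g : Dual k C) : wedge (f * g) = wedge f ∘ₗ wedge g := by
  ext c
  refine Module.eval_apply_injective k (LinearMap.ext fun φ => ?_)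
  simp only [Module.Dual.eval_apply, ← mul_apply_eq_apply_wedge, LinearMap.comp_apply, mul_assoc]

theorem wedge_add (f g : Dual k C) : wedge (f + g) = wedge f + wedge g := by
  ext c
  simp [wedge, LinearMap.lTensor_add]

theorem wedge_smul (a : k) (f : Dual k C) : wedge (a • f) = a • wedge f := by
  ext c
  simp [wedge, LinearMap.lTensor_smul]

def wedgeₗ : Dual k C →ₗ[k] C →ₗ[k] C where
  toFun := wedge
  map_add' := wedge_add
  map_smul' := wedge_smul

theorem wedge_zero : wedge (0 : Dual k C) = 0 :=
  map_zero wedgeₗ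

theorem exists_finiteDimensional_wedge_eq_zero (c : C) :
    ∃ N : Submodule k C, FiniteDimensional k N ∧ ∀ h ∈ N.dualAnnihilator, wedge h c = 0 := by
  classical
  refine ⟨span k ((ℛ k c).index.image (ℛ k c).right : Set C), inferInstance, fun h hh => ?_⟩
  simp only [wedge, LinearMap.comp_apply, LinearEquiv.coe_coe, ← (ℛ k c).eq, map_sum,
    LinearMap.lTensor_tmul, TensorProduct.rid_tmul]
  refine Finset.sum_eq_zero fun i hi => ?_
  rw [(mem_dualAnnihilator h).1 hh _ (subset_span (Finset.mem_image_of_mem _ hi)), zero_smul]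

theorem IsLeftDRing.exists_eq_dualAnnihilator_iSup (hD : IsLeftDRing (Dual k C))
    (I : Ideal (Dual k C)) : ∃ H : Set (Dual k C),
      ∀ f, f ∈ I ↔ f ∈ (⨆ h ∈ H, LinearMap.range (wedge h)).dualAnnihilator := by
  obtain ⟨H, hH⟩ := hD I
  refine ⟨H, fun f => ?_⟩
  rw [← SetLike.mem_coe, hH]
  simp only [Set.mem_ofPred_eq, mul_eq_comp_wedge, ← LinearMap.range_le_ker_iff,
    dualAnnihilator_iSup_eq, mem_iInf, mem_dualAnnihilator, SetLike.le_def, LinearMap.mem_ker]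

variable (k C) in
def finiteRankIdeal : Ideal (Dual k C) where
  carrier := {h | FiniteDimensional k (LinearMap.range (wedge h))}
  add_mem' {a b} (ha : FiniteDimensional k _) (hb : FiniteDimensional k _) :=
    Submodule.finiteDimensional_of_le (wedge_add a b ▸ LinearMap.range_add_le _ _)
  zero_mem' := by
    change FiniteDimensional k (LinearMap.range (wedge 0))
    rw [wedge_zero, LinearMap.range_zero]
    infer_instance
  smul_mem' r h (hh : FiniteDimensional k _) := by
    change FiniteDimensional k (LinearMap.range (wedge (r * h)))
    rw [wedge_mul, LinearMap.range_comp]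
    infer_instance

def wedgeAnnihilator (c : C) : Ideal (Dual k C) where
  carrier := {f | wedge f c = 0}
  add_mem' {a b} (ha : wedge a c = 0) (hb : wedge b c = 0) := by
    change wedge (a + b) c = 0
    rw [wedge_add, LinearMap.add_apply, ha, hb, add_zero]
  zero_mem' := by
    change wedge 0 c = 0
    rw [wedge_zero, LinearMap.zero_apply]
  smul_mem' r f (hf : wedge f c = 0) := by
    change wedge (r * f) c = 0
    rw [wedge_mul, LinearMap.comp_apply, hf, map_zero]


variable (k C) in
def finiteRankCoannihilator : Submodule k C :=
  ((finiteRankIdeal k C).restrictScalars k).dualCoannihilator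

theorem IsLeftDRing.finiteDimensional_range_wedge (hD : IsLeftDRing (Dual k C)) {h : Dual k C}
    (hh : h ∈ (finiteRankCoannihilator k C).dualAnnihilator) :
    FiniteDimensional k (LinearMap.range (wedge h)) := by
  obtain ⟨H, hH⟩ := hD.exists_eq_dualAnnihilator_iSup (finiteRankIdeal k C)
  have hX : ⨆ h ∈ H, LinearMap.range (wedge h) ≤ finiteRankCoannihilator k C :=
    fun x hx => (mem_dualCoannihilator x).2 fun g hg => (mem_dualAnnihilator g).1 ((hH g).1 hg) x hx
  exact (hH h).2 (dualAnnihilator_anti hX hh)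

theorem IsLeftDRing.iSup_range_wedge_eq_top (hD : IsLeftDRing (Dual k C)) :
    ⨆ h ∈ (finiteRankCoannihilator k C).dualAnnihilator, LinearMap.range (wedge h) = ⊤ := by
  refine eq_top_iff.2 fun c _ => ?_
  obtain ⟨N, hNfd, hN⟩ := exists_finiteDimensional_wedge_eq_zero (k := k) c
  obtain ⟨H, hH⟩ := hD.exists_eq_dualAnnihilator_iSup (wedgeAnnihilator c)
  have hXN : ⨆ h ∈ H, LinearMap.range (wedge h) ≤ N :=
    Subspace.dualAnnihilator_le_dualAnnihilator_iff.1 fun f hf => (hH f).1 (hN f hf)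
  have hcX : c ∈ ⨆ h ∈ H, LinearMap.range (wedge h) := by
    refine (Subspace.forall_mem_dualAnnihilator_apply_eq_zero_iff _ c).1 fun φ hφ => ?_
    rw [← counit_wedge, show wedge φ c = 0 from (hH φ).2 hφ, map_zero]
  have hH_fin : ∀ h ∈ H, h ∈ (finiteRankCoannihilator k C).dualAnnihilator := fun h hh =>
    le_dualCoannihilator_dualAnnihilator _ (Submodule.finiteDimensional_of_le
      ((le_iSup₂ (f := fun h (_ : h ∈ H) => LinearMap.range (wedge h)) h hh).trans hXN))
  exact biSup_mono (f := fun h => LinearMap.range (wedge h)) hH_fin hcX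

/-- If `C*` is a left D-ring then `C` is finite dimensional. -/
theorem statement4 {k : Type*} [Field k] {C : Type*} [AddCommGroup C] [Module k C]
    [Coalgebra k C] (hD : IsLeftDRing (Module.Dual k C)) :
    FiniteDimensional k C :=
  finiteDimensional_of_iSup_range_eq_top wedgeₗ (finiteRankCoannihilator k C)
    exists_finiteDimensional_wedge_eq_zero (fun _ => hD.finiteDimensional_range_wedge)
    hD.iSup_range_wedge_eq_top

end Paper
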